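/- arXiv:1703.09754 — 2 statements merged into one kernel-verified Lean document; each statement's English description precedes it below -/
import Mathlib

section
/- Let (X,d) be a compact metric space with a fixed reference probability measure m, and assume (X,d,m) is regular: every coupling γ between m and any ν ∈ P(X) achieving the infimum defining W₂(m,ν) is of the form γ = (Id,T)_# m for some measurable map T : X → X. Let μ ∈ P(X), and for each ε > 0 let μ_ε be the unique minimizer over P(X) of F_ε(ν) := ∫_X ∫_X d(y,x)² dμ(x) dν(y) + ε·W₂(m,ν)². Then every weak-* limit point μ₀ of the family (μ_ε) as ε → 0 satisfies supp μ₀ ⊆ b(μ). -/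
open MeasureTheory Filter

section Defs

variable {X : Type*} [MetricSpace X] [MeasurableSpace X]

/-- The set of metric barycenters of `μ`: the minimizers over `y ∈ X` of
`y ↦ ∫ d(x,y)² dμ(x)`. -/
def bary (μ : ProbabilityMeasure X) : Set X :=
  {y : X | ∀ z : X,
    ∫ x, dist x y ^ 2 ∂(μ : Measure X) ≤ ∫ x, dist x z ^ 2 ∂(μ : Measure X)}

/-- `γ` is a coupling of `μ` and `ν`: a measure on `X × X` with marginals `μ` and `ν`. -/
def IsCoupling (γ : Measure (X × X)) (μ ν : ProbabilityMeasure X) : Prop :=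
  γ.map Prod.fst = (μ : Measure X) ∧ γ.map Prod.snd = (ν : Measure X)

/-- The squared 2-Wasserstein distance `W₂(μ,ν)²`. -/
noncomputable def W2sq (μ ν : ProbabilityMeasure X) : ℝ :=
  sInf {c : ℝ | ∃ γ : Measure (X × X), IsCoupling γ μ ν ∧
    c = ∫ p, dist p.1 p.2 ^ 2 ∂γ}

/-- The 2-Wasserstein distance `W₂(μ,ν)`. -/
noncomputable def W2 (μ ν : ProbabilityMeasure X) : ℝ := Real.sqrt (W2sq μ ν)

/-- The support of a probability measure: the set of points all of whose open
neighbourhoods have positive measure. -/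
def mSupport (μ : ProbabilityMeasure X) : Set X :=
  {x : X | ∀ U : Set X, IsOpen U → x ∈ U → (μ : Measure X) U ≠ 0}

/-- `(X,d,m)` is regular: every coupling between `m` and any `ν ∈ P(X)` achieving the
infimum defining `W₂(m,ν)` is of the form `(Id,T)_# m` for some measurable map `T`. -/
def Regular (m : ProbabilityMeasure X) : Prop :=
  ∀ ν : ProbabilityMeasure X, ∀ γ : Measure (X × X), IsCoupling γ m ν →
    (∫ p, dist p.1 p.2 ^ 2 ∂γ) = W2sq m ν →
    ∃ T : X → X, Measurable T ∧ γ = (m : Measure X).map (fun x => (x, T x))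

/-- The variance of `μ`: the minimal value of `y ↦ ∫ d(x,y)² dμ(x)`. -/
noncomputable def mvar (μ : ProbabilityMeasure X) : ℝ :=
  ⨅ y : X, ∫ x, dist x y ^ 2 ∂(μ : Measure X)

end Defs

/-!
Testing the minimality of `μ_ε` against the Dirac mass `δ_z` gives
`∫ g dμ_ε ≤ g z + ε W₂(m, δ_z)²` for `g y = ∫ d(y,x)² dμ(x)`, since the Wasserstein term of
`μ_ε` is nonnegative. As `g` is bounded and continuous on the compact space `X`, this passes to
any weak-* limit point: `∫ g dμ₀ ≤ g z` for every `z`. Hence `g` equals its minimum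
`μ₀`-almost everywhere, and by continuity it attains the minimum on `supp μ₀`.
-/

open Topology BoundedContinuousFunction

lemma W2sq_nonneg {X : Type*} [MetricSpace X] [MeasurableSpace X]
    (μ ν : ProbabilityMeasure X) : 0 ≤ W2sq μ ν :=
  Real.sInf_nonneg <| by
    rintro c ⟨γ, -, rfl⟩
    exact integral_nonneg fun p => by positivity

lemma continuous_integral_dist_sq {X : Type*} [MetricSpace X] [CompactSpace X]
    [MeasurableSpace X] [OpensMeasurableSpace X] (μ : Measure X) [IsFiniteMeasure μ] :
    Continuous fun y => ∫ x, dist y x ^ 2 ∂μ := by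
  simpa using continuous_parametric_integral_of_continuous (μ := μ)
    (f := fun y x : X => dist y x ^ 2) (by fun_prop) isCompact_univ

lemma integral_le_of_mapClusterPt {X ι : Type*} [TopologicalSpace X] [MeasurableSpace X]
    [OpensMeasurableSpace X] {l : Filter ι} {f : ι → ProbabilityMeasure X}
    {μ₀ : ProbabilityMeasure X} (hμ₀ : MapClusterPt μ₀ l f) (g : X →ᵇ ℝ) {u : ι → ℝ} {c : ℝ}
    (hu : Tendsto u l (𝓝 c)) (hle : ∀ᶠ i in l, ∫ x, g x ∂(f i : Measure X) ≤ u i) :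
    ∫ x, g x ∂(μ₀ : Measure X) ≤ c := by
  obtain ⟨U, hUl, hU⟩ := mapClusterPt_iff_ultrafilter.mp hμ₀
  exact le_of_tendsto_of_tendsto
    (ProbabilityMeasure.tendsto_iff_forall_integral_tendsto.mp hU g) (hu.mono_left hUl)
    (hUl hle)

lemma le_integral_of_mem_mSupport {X : Type*} [MetricSpace X] [MeasurableSpace X]
    {μ : ProbabilityMeasure X} {g : X → ℝ} (hg : Continuous g) 
    (hgi : Integrable g (μ : Measure X))
    (hle : ∀ z, ∫ x, g x ∂(μ : Measure X) ≤ g z) {y : X} (hy : y ∈ mSupport μ) :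
    g y ≤ ∫ x, g x ∂(μ : Measure X) := by
  set c := ∫ x, g x ∂(μ : Measure X)
  have hae : (fun x => g x - c) =ᵐ[(μ : Measure X)] 0 := by
    refine (integral_eq_zero_iff_of_nonneg (fun z => sub_nonneg.mpr (hle z))
      (hgi.sub (integrable_const c))).mp ?_
    rw [integral_sub hgi (integrable_const c)]
    simp [c]
  by_contra! hcy
  refine hy {x | c < g x} (isOpen_lt continuous_const hg) hcy ?_
  exact measure_mono_null (fun x hx => sub_ne_zero.mpr (ne_of_gt hx)) (ae_iff.mp hae)

theorem clusterPt_support_subset_bary_general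
    {X : Type*} [MetricSpace X] [CompactSpace X]
    [MeasurableSpace X] [BorelSpace X]
    (m : ProbabilityMeasure X) (μ : ProbabilityMeasure X)
    (f : ℝ → ProbabilityMeasure X)
    (hf : ∀ ε : ℝ, 0 < ε → ∀ ρ : ProbabilityMeasure X,
      (∫ y, (∫ x, dist y x ^ 2 ∂(μ : Measure X)) ∂(f ε : Measure X)) + ε * W2sq m (f ε) ≤
      (∫ y, (∫ x, dist y x ^ 2 ∂(μ : Measure X)) ∂(ρ : Measure X)) + ε * W2sq m ρ)
    (μ₀ : ProbabilityMeasure X)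
    (hμ₀ : MapClusterPt μ₀ (nhdsWithin (0 : ℝ) (Set.Ioi 0)) f) :
    mSupport μ₀ ⊆ bary μ := by
  set g : X → ℝ := fun y => ∫ x, dist y x ^ 2 ∂(μ : Measure X)
  have hg : Continuous g := continuous_integral_dist_sq (μ : Measure X)
  have hlim : ∀ z, ∫ y, g y ∂(μ₀ : Measure X) ≤ g z := by
    intro z
    have hu : Tendsto (fun ε => g z + ε * W2sq m (diracProba z)) (𝓝[>] 0) (𝓝 (g z)) := by
      have hcont : Continuous fun ε : ℝ => g z + ε * W2sq m (diracProba z) := by fun_prop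
      simpa using (hcont.tendsto 0).mono_left nhdsWithin_le_nhds
    refine integral_le_of_mapClusterPt hμ₀ (mkOfCompact ⟨g, hg⟩) hu ?_
    filter_upwards [self_mem_nhdsWithin] with ε hε
    have hmin := hf ε hε (diracProba z)
    have hpen := mul_nonneg hε.le (W2sq_nonneg m (f ε))
    rw [show (diracProba z : Measure X) = Measure.dirac z from rfl, integral_dirac] at hmin
    simp only [mkOfCompact_apply, ContinuousMap.coe_mk]
    linarith
  intro y hy z
  simp only [dist_comm _ y, dist_comm _ z]
  exact (le_integral_of_mem_mSupport hg (hg.integrable_of_hasCompactSupport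
    (HasCompactSupport.of_compactSpace g)) hlim hy).trans (hlim z)

/-- If `(X,d,m)` is regular and, for every `ε > 0`, `f ε` is the minimizer of
`F_ε(ν) = ∫∫ d(y,x)² dμ(x) dν(y) + ε·W₂(m,ν)²` over `P(X)`, then every weak-* limit point
`μ₀` of the family `(f ε)` as `ε → 0` satisfies `supp μ₀ ⊆ b(μ)`. -/
theorem clusterPt_support_subset_bary
    {X : Type*} [MetricSpace X] [CompactSpace X]
    [MeasurableSpace X] [BorelSpace X]
    (m : ProbabilityMeasure X) (hreg : Regular m) (μ : ProbabilityMeasure X)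
    (f : ℝ → ProbabilityMeasure X)
    (hf : ∀ ε : ℝ, 0 < ε → ∀ ρ : ProbabilityMeasure X,
      (∫ y, (∫ x, dist y x ^ 2 ∂(μ : Measure X)) ∂(f ε : Measure X)) + ε * W2sq m (f ε) ≤
      (∫ y, (∫ x, dist y x ^ 2 ∂(μ : Measure X)) ∂(ρ : Measure X)) + ε * W2sq m ρ)
    (μ₀ : ProbabilityMeasure X)
    (hμ₀ : MapClusterPt μ₀ (nhdsWithin (0 : ℝ) (Set.Ioi 0)) f) :
    mSupport μ₀ ⊆ bary μ :=
  clusterPt_support_subset_bary_general m μ f hf μ₀ hμ₀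
end

section
/- Let X = ℝ/ℤ be the circle with the quotient metric d(x,y) = min_{k ∈ ℤ} |x̃ − ỹ + k| for lifts x̃, ỹ. Let N be an even positive integer and let x_i = i/N (mod 1) for i = 0, 1, ..., N−1 be N evenly spaced points. Then the set of minimizers over y ∈ X of the function y ↦ Σ_{i=0}^{N−1} d(y, x_i)² is exactly the set of the N midpoints {(2i+1)/(2N) (mod 1) : i = 0, 1, ..., N−1}, i.e., the points halfway between two neighbouring points x_i. -/
/-!
Translating `y` by `1/N` permutes the points `i/N`, so `F y = ∑ d(y, i/N)²` is `1/N`-periodic,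
and every `y` is a translate of a point `s` of the window `[1/2 - 1/N, 1/2]`. For such `s` every
lift `i/N`, `i < N`, lies within `1/2` of `s`, so `F s = ∑ (s - i/N)²` is a Euclidean quadratic,
equal to `N (s - c)² + F c` where `c = 1/2 - 1/(2N)` is the mean of the `i/N`. So the minimizers
are the translates of `c` by multiples of `1/N`, and for even `N` the point `c = (N - 1)/(2N)` is
a midpoint.
-/

open Finset

theorem AddCircle.dist_coe_coe_of_abs_sub_le {p a b : ℝ} (hp : p ≠ 0)
    (h : |a - b| ≤ |p| / 2) :
    dist (a : AddCircle p) (b : AddCircle p) = |a - b| := by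
  rw [dist_eq_norm, ← AddCircle.coe_sub, (AddCircle.norm_coe_eq_abs_iff p hp).mpr h]

theorem ZMod.sum_range_natCast {M : Type*} [AddCommMonoid M] (N : ℕ) [NeZero N]
    (f : ZMod N → M) : ∑ i ∈ range N, f i = ∑ x, f x :=
  sum_nbij' (fun i ↦ (i : ZMod N)) ZMod.val (by simp) (fun x _ ↦ by simpa using x.val_lt)
    (fun i hi ↦ ZMod.val_cast_of_lt (mem_range.mp hi)) (fun x _ ↦ x.natCast_zmod_val)
    (fun _ _ ↦ rfl)

theorem Finset.sum_sq_sub_eq_card_mul_sq_add {ι R : Type*} [CommRing R] (s : Finset ι)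
    (a : ι → R) {c : R} (hc : ∑ i ∈ s, (c - a i) = 0) (t : R) :
    ∑ i ∈ s, (t - a i) ^ 2 = #s * (t - c) ^ 2 + ∑ i ∈ s, (c - a i) ^ 2 := by
  have expand : ∀ i ∈ s,
      (t - a i) ^ 2 = (t - c) ^ 2 + 2 * (t - c) * (c - a i) + (c - a i) ^ 2 :=
    fun i _ ↦ by ring
  rw [sum_congr rfl expand, sum_add_distrib, sum_add_distrib, ← mul_sum, hc]
  simp

theorem UnitAddCircle.exists_eq_coe_add_toAddCircle (N : ℕ) [NeZero N] (y : UnitAddCircle) :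
    ∃ s ∈ Set.Icc (1 / 2 - 1 / N : ℝ) (1 / 2), ∃ j : ZMod N,
      y = s + ZMod.toAddCircle j := by
  have hN : (0 : ℝ) < N := Nat.cast_pos.mpr (NeZero.pos N)
  obtain ⟨u, rfl⟩ := QuotientAddGroup.mk_surjective y
  set k := ⌈(u - 1 / 2) * N⌉
  have hk_ge : u - 1 / 2 ≤ k / N := (le_div_iff₀ hN).mpr (Int.le_ceil _)
  have hk_lt : k / N < u - 1 / 2 + 1 / N := by
    rw [div_lt_iff₀ hN, add_mul, one_div_mul_cancel hN.ne']
    exact Int.ceil_lt_add_one _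
  refine ⟨u - k / N, ⟨by linarith, by linarith⟩, k, ?_⟩
  rw [ZMod.toAddCircle_intCast, ← AddCircle.coe_add, sub_add_cancel]

theorem sum_range_sub_div_eq_zero (N : ℕ) [NeZero N] :
    ∑ i ∈ range N, ((1 / 2 - 1 / (2 * N) : ℝ) - i / N) = 0 := by
  obtain ⟨n, rfl⟩ : ∃ n, N = n + 1 := Nat.exists_eq_add_one.mpr (NeZero.pos N)
  have gauss : (∑ i ∈ range (n + 1), (i : ℝ)) * 2 = ((n : ℝ) + 1) * n := by
    have h := sum_range_id_mul_two (n + 1)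
    rw [Nat.add_sub_cancel] at h
    simpa using congrArg (Nat.cast (R := ℝ)) h
  rw [sum_sub_distrib, ← sum_div, sum_const, card_range, nsmul_eq_mul]
  field_simp
  push_cast
  linarith

noncomputable def sumSqDist (N : ℕ) (y : UnitAddCircle) : ℝ :=
  ∑ i ∈ range N, dist y ((i / N : ℝ) : UnitAddCircle) ^ 2

namespace sumSqDist

variable (N : ℕ) [NeZero N]

theorem eq_sum_zmod (y : UnitAddCircle) :
    sumSqDist N y = ∑ j : ZMod N, dist y (ZMod.toAddCircle j) ^ 2 := by
  simp only [sumSqDist, ← ZMod.toAddCircle_natCast, ZMod.sum_range_natCast N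
    (fun j ↦ dist y (ZMod.toAddCircle j) ^ 2)]

theorem add_toAddCircle (y : UnitAddCircle) (j : ZMod N) :
    sumSqDist N (y + ZMod.toAddCircle j) = sumSqDist N y := by
  simp only [eq_sum_zmod, ← dist_sub_eq_dist_add_right, ← map_sub]
  exact (Equiv.subRight j).sum_comp (fun k ↦ dist y (ZMod.toAddCircle k) ^ 2)

theorem coe_eq_sum_sq {s : ℝ} (hs : s ∈ Set.Icc (1 / 2 - 1 / N : ℝ) (1 / 2)) :
    sumSqDist N s = ∑ i ∈ range N, (s - i / N) ^ 2 := by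
  have hN : (0 : ℝ) < N := Nat.cast_pos.mpr (NeZero.pos N)
  refine sum_congr rfl fun i hi ↦ ?_
  have hi : (i : ℝ) + 1 ≤ N := by exact_mod_cast mem_range.mp hi
  have hi_div : (i : ℝ) / N ≤ 1 - 1 / N := by
    rw [div_le_iff₀ hN, sub_mul, one_div_mul_cancel hN.ne']; linarith
  have hclose : |s - i / N| ≤ |(1 : ℝ)| / 2 := by
    rw [abs_one, abs_le]
    constructor <;> linarith [hs.1, hs.2, div_nonneg i.cast_nonneg hN.le]
  rw [AddCircle.dist_coe_coe_of_abs_sub_le one_ne_zero hclose, sq_abs]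

theorem coe_eq_mul_sq_add {s : ℝ} (hs : s ∈ Set.Icc (1 / 2 - 1 / N : ℝ) (1 / 2)) :
    sumSqDist N s =
      N * (s - (1 / 2 - 1 / (2 * N))) ^ 2 + sumSqDist N (1 / 2 - 1 / (2 * N) : ℝ) := by
  have hN : (0 : ℝ) < N := Nat.cast_pos.mpr (NeZero.pos N)
  have hc : (1 / 2 - 1 / (2 * N) : ℝ) ∈ Set.Icc (1 / 2 - 1 / N : ℝ) (1 / 2) := by
    constructor
    · field_simp; linarith
    · have : 0 ≤ 1 / (2 * (N : ℝ)) := by positivity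
      linarith
  rw [coe_eq_sum_sq N hs, coe_eq_sum_sq N hc,
    sum_sq_sub_eq_card_mul_sq_add _ _ (sum_range_sub_div_eq_zero N), card_range]

theorem coe_add_toAddCircle {s : ℝ} (hs : s ∈ Set.Icc (1 / 2 - 1 / N : ℝ) (1 / 2))
    (j : ZMod N) :
    sumSqDist N (s + ZMod.toAddCircle j) =
      N * (s - (1 / 2 - 1 / (2 * N))) ^ 2 + sumSqDist N (1 / 2 - 1 / (2 * N) : ℝ) := by
  rw [add_toAddCircle, coe_eq_mul_sq_add N hs]

theorem setOf_forall_le :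
    {y | ∀ z, sumSqDist N y ≤ sumSqDist N z} =
      Set.range fun j : ZMod N ↦
        ((1 / 2 - 1 / (2 * N) : ℝ) : UnitAddCircle) + ZMod.toAddCircle j := by
  have hN : (0 : ℝ) < N := Nat.cast_pos.mpr (NeZero.pos N)
  ext y
  obtain ⟨s, hs, j, rfl⟩ := UnitAddCircle.exists_eq_coe_add_toAddCircle N y
  simp only [Set.mem_ofPred_eq, Set.mem_range]
  constructor
  · intro hmin
    have h := hmin (1 / 2 - 1 / (2 * N) : ℝ)
    rw [coe_add_toAddCircle N hs] at h
    have hsq : (s - (1 / 2 - 1 / (2 * N))) ^ 2 = 0 := le_antisymm (by nlinarith) (sq_nonneg _)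
    have hs_eq : s = 1 / 2 - 1 / (2 * N) := sub_eq_zero.mp (pow_eq_zero_iff two_ne_zero |>.mp hsq)
    exact ⟨j, by rw [hs_eq]⟩
  · rintro ⟨k, hk⟩ z
    obtain ⟨t, ht, l, rfl⟩ := UnitAddCircle.exists_eq_coe_add_toAddCircle N z
    rw [← hk, add_toAddCircle, coe_add_toAddCircle N ht]
    nlinarith [sq_nonneg (t - (1 / 2 - 1 / (2 * N)))]

end sumSqDist

theorem coe_midpoint_eq_add_toAddCircle (m : ℕ) [NeZero (m + m)] (i : ℕ) :
    (((2 * i + 1) / (2 * (m + m : ℕ)) : ℝ) : UnitAddCircle) =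
      ((1 / 2 - 1 / (2 * (m + m : ℕ)) : ℝ) : UnitAddCircle) +
        ZMod.toAddCircle ((i + 1 - m : ℤ) : ZMod (m + m)) := by
  have hm : (m : ℝ) ≠ 0 := by
    have := NeZero.ne (m + m)
    exact_mod_cast (by omega : m ≠ 0)
  rw [ZMod.toAddCircle_intCast, ← AddCircle.coe_add]
  congr 1
  push_cast
  field_simp
  ring

theorem range_coe_add_toAddCircle_eq_midpoints (N : ℕ) [NeZero N] (hN : Even N) :
    (Set.range fun j : ZMod N ↦
        ((1 / 2 - 1 / (2 * N) : ℝ) : UnitAddCircle) + ZMod.toAddCircle j) =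
      {y | ∃ i < N, y = (((2 * i + 1) / (2 * N) : ℝ) : UnitAddCircle)} := by
  obtain ⟨m, rfl⟩ := hN
  ext y
  simp only [Set.mem_range, Set.mem_ofPred_eq]
  constructor
  · rintro ⟨j, rfl⟩
    refine ⟨(j + m - 1).val, ZMod.val_lt _, ?_⟩
    rw [coe_midpoint_eq_add_toAddCircle]
    push_cast [ZMod.natCast_zmod_val]
    ring_nf
  · rintro ⟨i, -, rfl⟩
    exact ⟨_, (coe_midpoint_eq_add_toAddCircle m i).symm⟩

/-- On the circle `ℝ/ℤ` with the quotient metric, for an even number `N > 0` of evenly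
spaced points `x_i = i/N`, the set of minimizers of `y ↦ Σᵢ d(y, x_i)²` is exactly the set
of the `N` midpoints `(2i+1)/(2N)` between neighbouring points. -/
theorem circle_barycenters_even
    (N : ℕ) (hN : Even N) (hNpos : 0 < N) :
    {y : AddCircle (1 : ℝ) | ∀ z : AddCircle (1 : ℝ),
        ∑ i ∈ Finset.range N, dist y (((i : ℝ) / (N : ℝ) : ℝ) : AddCircle (1 : ℝ)) ^ 2 ≤
        ∑ i ∈ Finset.range N, dist z (((i : ℝ) / (N : ℝ) : ℝ) : AddCircle (1 : ℝ)) ^ 2} =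
      {y : AddCircle (1 : ℝ) | ∃ i < N,
        y = (((2 * (i : ℝ) + 1) / (2 * (N : ℝ)) : ℝ) : AddCircle (1 : ℝ))} := by
  have : NeZero N := .of_pos hNpos
  exact (sumSqDist.setOf_forall_le N).trans (range_coe_add_toAddCircle_eq_midpoints N hN)
end
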